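/- For a rank r matroid M and n < r, the n-th Whitney numbers of the first kind satisfy w_n(M) ≥ w_n(T^{r−n}(M)), where T^{r−n}(M) is the truncation of M to rank n. -/

import Mathlib

open Finset

/-- A finite matroid on ground set `E`, presented by its rank function. -/
structure FinMatroid (E : Type) [DecidableEq E] [Fintype E] where
  rk : Finset E → ℕ
  rk_le_card : ∀ X, rk X ≤ X.card
  rk_mono : ∀ ⦃X Y : Finset E⦄, X ⊆ Y → rk X ≤ rk Y
  rk_submod : ∀ X Y, rk (X ∪ Y) + rk (X ∩ Y) ≤ rk X + rk Y

namespace FinMatroid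

variable {E α β γ : Type} [DecidableEq E] [Fintype E]

/-- A set is independent iff its rank equals its cardinality. -/
def Indep (M : FinMatroid E) (X : Finset E) : Prop := M.rk X = X.card

/-- The closure of a set: all elements whose insertion does not raise the rank. -/
def closure (M : FinMatroid E) (X : Finset E) : Finset E :=
  univ.filter fun e => M.rk (insert e X) = M.rk X

/-- A flat is a closed set. -/
def IsFlat (M : FinMatroid E) (X : Finset E) : Prop := M.closure X = X

instance (M : FinMatroid E) (X : Finset E) : Decidable (M.IsFlat X) :=
  decidable_of_iff (M.closure X = X) Iff.rfl

/-- The rank of the matroid. -/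
def rank (M : FinMatroid E) : ℕ := M.rk univ

/-- The image of a finite set under a map into `E(N) ∪ {o}`; the zero element `o`
is modelled by `none` and contributes nothing to the image. -/
def optImage [DecidableEq β] (τ : α → Option β) (X : Finset α) : Finset β :=
  X.biUnion fun a => (τ a).toFinset

variable [DecidableEq α] [Fintype α] [DecidableEq β] [Fintype β]

/-- `τ : E(M) ∪ o → E(N) ∪ o` (with `o ↦ o`) is a weak map iff the rank of the image of any
set is at most the rank of the set. -/
def IsWeakMap (M : FinMatroid α) (N : FinMatroid β) (τ : α → Option β) : Prop :=
  ∀ X : Finset α, N.rk (optImage τ X) ≤ M.rk X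

/-- `τ` is surjective if every (nonzero) element of `E(N)` is in the image. -/
def IsSurjMap (τ : α → Option β) : Prop := ∀ b : β, ∃ a : α, τ a = some b

/-- Preimage of `Y ∪ {o}` under `τ`, intersected with `E(M)`. -/
def optPreimage (τ : α → Option β) (Y : Finset β) : Finset α :=
  univ.filter fun a => ∀ b, τ a = some b → b ∈ Y

/-- A strong map: preimages of flats are flats. -/
def IsStrongMap (M : FinMatroid α) (N : FinMatroid β) (τ : α → Option β) : Prop :=
  ∀ Y : Finset β, N.IsFlat Y → M.IsFlat (optPreimage τ Y)

/-- The induced map `τ^#` on flats, `X ↦ cl_N(τ(X))`. -/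
def hmap (N : FinMatroid β) (τ : α → Option β) (X : Finset α) : Finset β :=
  N.closure (optImage τ X)

/-- The Möbius function `μ(0̂, X)` of the lattice of flats of `M`, where `0̂ = cl(∅)`. -/
def mu (M : FinMatroid E) (X : Finset E) : ℤ :=
  if X = M.closure ∅ then 1
  else - ∑ Y ∈ (X.powerset.filter fun Y => M.IsFlat Y ∧ Y ≠ X).attach, M.mu Y.1
termination_by X.card
decreasing_by
  have h := Y.2
  simp only [Finset.mem_filter, Finset.mem_powerset] at h
  exact Finset.card_lt_card (h.1.ssubset_of_ne h.2.2)

/-- The `k`-th Whitney number of the first kind. -/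
def whitney (M : FinMatroid E) (k : ℕ) : ℕ :=
  ∑ X ∈ univ.powerset.filter (fun X => M.IsFlat X ∧ M.rk X = k), (M.mu X).natAbs

end FinMatroid
namespace FinMatroid

variable {E : Type} [DecidableEq E] [Fintype E] (M : FinMatroid E)

lemma mem_closure {e : E} {X : Finset E} :
    e ∈ M.closure X ↔ M.rk (insert e X) = M.rk X := by
  simp [closure]

lemma subset_closure (X : Finset E) : X ⊆ M.closure X := by
  intro e he
  rw [mem_closure, Finset.insert_eq_self.2 he]

lemma rk_empty : M.rk ∅ = 0 := Nat.le_zero.1 (M.rk_le_card ∅)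

lemma rk_insert_le (e : E) (X : Finset E) : M.rk (insert e X) ≤ M.rk X + 1 := by
  have h := M.rk_submod X {e}
  have h2 : M.rk {e} ≤ 1 := M.rk_le_card {e}
  have : X ∪ {e} = insert e X := by
    rw [Finset.union_comm, ← Finset.insert_eq]
  rw [this] at h
  omega

lemma rk_union_eq (X S : Finset E) (h : ∀ e ∈ S, M.rk (insert e X) = M.rk X) :
    M.rk (X ∪ S) = M.rk X := by
  induction S using Finset.induction with
  | empty => simp
  | insert _ _ ha ih =>
    rename_i a S
    have hih := ih (fun e he => h e (Finset.mem_insert_of_mem he))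
    have key := M.rk_submod (insert a X) (X ∪ S)
    have h1 : insert a X ∪ (X ∪ S) = X ∪ insert a S := by
      rw [Finset.insert_union, ← Finset.union_assoc, Finset.union_self, Finset.union_insert]
    have h2 : X ⊆ insert a X ∩ (X ∪ S) := by
      intro x hx; simp [Finset.mem_inter, Finset.mem_insert, hx]
    have h3 := M.rk_mono h2
    have h4 : M.rk (insert a X) = M.rk X := h a (Finset.mem_insert_self a S)
    have h5 : M.rk X ≤ M.rk (X ∪ insert a S) := M.rk_mono Finset.subset_union_left
    rw [h1] at key
    omega

lemma rk_closure (X : Finset E) : M.rk (M.closure X) = M.rk X := by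
  have h1 : M.rk (X ∪ M.closure X) = M.rk X :=
    M.rk_union_eq X (M.closure X) (fun e he => (M.mem_closure.1 he))
  have h2 : M.rk (M.closure X) ≤ M.rk (X ∪ M.closure X) :=
    M.rk_mono Finset.subset_union_right
  have h3 : M.rk X ≤ M.rk (M.closure X) := M.rk_mono (M.subset_closure X)
  omega

lemma closure_mono {X Y : Finset E} (hXY : X ⊆ Y) : M.closure X ⊆ M.closure Y := by
  intro e he
  rw [mem_closure] at he ⊢
  have key := M.rk_submod (insert e X) Y
  have h1 : insert e X ∪ Y = insert e Y := by
    rw [Finset.insert_union, Finset.union_eq_right.2 hXY]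
  have h2 : X ⊆ insert e X ∩ Y := by
    intro x hx; simp [Finset.mem_inter, Finset.mem_insert, hx, hXY hx]
  have h3 := M.rk_mono h2
  have h4 : M.rk Y ≤ M.rk (insert e Y) := M.rk_mono (Finset.subset_insert e Y)
  rw [h1] at key
  omega

lemma isFlat_closure (X : Finset E) : M.IsFlat (M.closure X) := by
  unfold IsFlat
  apply Finset.Subset.antisymm
  · intro e he
    rw [mem_closure] at he ⊢
    rw [M.rk_closure] at he
    have h1 : M.rk (insert e X) ≤ M.rk (insert e (M.closure X)) :=
      M.rk_mono (Finset.insert_subset_insert e (M.subset_closure X))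
    have h2 : M.rk X ≤ M.rk (insert e X) := M.rk_mono (Finset.subset_insert e X)
    omega
  · exact M.subset_closure _

lemma flat_subset_of_rk_le {X Y : Finset E} (hY : M.IsFlat Y) (hYX : Y ⊆ X)
    (h : M.rk X ≤ M.rk Y) : X ⊆ Y := by
  intro e he
  have h1 : insert e Y ⊆ X := Finset.insert_subset he hYX
  have h2 : M.rk (insert e Y) ≤ M.rk Y := le_trans (M.rk_mono h1) h
  have h3 : M.rk Y ≤ M.rk (insert e Y) := M.rk_mono (Finset.subset_insert e Y)
  have : e ∈ M.closure Y := M.mem_closure.2 (le_antisymm h2 h3)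
  rwa [hY] at this

lemma rk_lt_of_flat_ssubset {X Y : Finset E} (hY : M.IsFlat Y) (hYX : Y ⊆ X)
    (hne : Y ≠ X) : M.rk Y < M.rk X := by
  rcases lt_or_ge (M.rk Y) (M.rk X) with h | h
  · exact h
  · exact absurd (Finset.Subset.antisymm hYX (M.flat_subset_of_rk_le hY hYX h)) hne

lemma closure_univ : M.closure univ = univ := by
  apply Finset.Subset.antisymm (Finset.subset_univ _) (M.subset_closure _)

lemma isFlat_univ : M.IsFlat univ := M.closure_univ

lemma closure_empty_subset_flat {X : Finset E} (h : M.IsFlat X) : M.closure ∅ ⊆ X := by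
  have := M.closure_mono (Finset.empty_subset X)
  rwa [h] at this

lemma mu_eq (X : Finset E) : M.mu X = if X = M.closure ∅ then 1
    else - ∑ Y ∈ X.powerset.filter (fun Y => M.IsFlat Y ∧ Y ≠ X), M.mu Y := by
  rw [mu]
  congr 1
  exact congrArg Neg.neg (Finset.sum_attach (X.powerset.filter fun Y => M.IsFlat Y ∧ Y ≠ X) M.mu)

lemma mu_closure_empty : M.mu (M.closure ∅) = 1 := by
  rw [mu_eq, if_pos rfl]

lemma sum_mu_flats {X : Finset E} (hX : M.IsFlat X) (hne : X ≠ M.closure ∅) :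
    ∑ Y ∈ X.powerset.filter (fun Y => M.IsFlat Y), M.mu Y = 0 := by
  have hsplit : X.powerset.filter (fun Y => M.IsFlat Y) =
      insert X (X.powerset.filter (fun Y => M.IsFlat Y ∧ Y ≠ X)) := by
    ext Y
    simp only [Finset.mem_insert, Finset.mem_filter, Finset.mem_powerset]
    constructor
    · rintro ⟨h1, h2⟩
      by_cases hYX : Y = X
      · exact Or.inl hYX
      · exact Or.inr ⟨h1, h2, hYX⟩
    · rintro (rfl | ⟨h1, h2, _⟩)
      · exact ⟨Finset.Subset.refl _, hX⟩
      · exact ⟨h1, h2⟩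
  have hXnot : X ∉ X.powerset.filter (fun Y => M.IsFlat Y ∧ Y ≠ X) := by simp
  rw [hsplit, Finset.sum_insert hXnot, M.mu_eq, if_neg hne]
  ring

end FinMatroid
namespace FinMatroid

variable {E : Type} [DecidableEq E] [Fintype E] (M : FinMatroid E)

lemma weisner (A : Finset E) (hA : M.IsFlat A) (hAne : A ≠ M.closure ∅) :
    ∀ X : Finset E, M.IsFlat X → A ⊆ X →
    ∑ Y ∈ X.powerset.filter (fun Y => M.IsFlat Y ∧ M.closure (Y ∪ A) = X), M.mu Y = 0 := by
  intro X
  induction X using Finset.strongInduction with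
  | _ X ih =>
    intro hX hAX
    have hXne : X ≠ M.closure ∅ := by
      intro h
      apply hAne
      have h0 : M.closure ∅ ⊆ A := M.closure_empty_subset_flat hA
      exact Finset.Subset.antisymm (h ▸ hAX) h0
    have maps : ∀ Y ∈ X.powerset.filter (fun Y => M.IsFlat Y),
        M.closure (Y ∪ A) ∈ X.powerset.filter (fun Z => M.IsFlat Z ∧ A ⊆ Z) := by
      intro Y hY
      simp only [Finset.mem_filter, Finset.mem_powerset] at hY ⊢
      refine ⟨?_, M.isFlat_closure _, ?_⟩
      · have h1 : Y ∪ A ⊆ X := Finset.union_subset hY.1 hAX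
        have h2 := M.closure_mono h1
        rwa [hX] at h2
      · exact (Finset.subset_union_right).trans (M.subset_closure _)
    have grouped := Finset.sum_fiberwise_of_maps_to maps M.mu
    rw [M.sum_mu_flats hX hXne] at grouped
    have fib_eq : ∀ Z ∈ X.powerset.filter (fun Z => M.IsFlat Z ∧ A ⊆ Z),
        (X.powerset.filter (fun Y => M.IsFlat Y)).filter (fun Y => M.closure (Y ∪ A) = Z)
        = Z.powerset.filter (fun Y => M.IsFlat Y ∧ M.closure (Y ∪ A) = Z) := by
      intro Z hZ
      simp only [Finset.mem_filter, Finset.mem_powerset] at hZ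
      ext Y
      simp only [Finset.mem_filter, Finset.mem_powerset]
      constructor
      · rintro ⟨⟨h1, h2⟩, h3⟩
        refine ⟨?_, h2, h3⟩
        calc Y ⊆ Y ∪ A := Finset.subset_union_left
        _ ⊆ M.closure (Y ∪ A) := M.subset_closure _
        _ = Z := h3
      · rintro ⟨h1, h2, h3⟩
        exact ⟨⟨h1.trans hZ.1, h2⟩, h3⟩
    have grouped2 : ∑ Z ∈ X.powerset.filter (fun Z => M.IsFlat Z ∧ A ⊆ Z),
        (∑ Y ∈ Z.powerset.filter (fun Y => M.IsFlat Y ∧ M.closure (Y ∪ A) = Z), M.mu Y)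
        = 0 := by
      rw [← grouped]
      exact Finset.sum_congr rfl (fun Z hZ => by rw [fib_eq Z hZ])
    have hXmem : X ∈ X.powerset.filter (fun Z => M.IsFlat Z ∧ A ⊆ Z) := by
      simp only [Finset.mem_filter, Finset.mem_powerset]
      exact ⟨Finset.Subset.refl _, hX, hAX⟩
    rw [← Finset.sum_erase_add _ _ hXmem] at grouped2
    have herase : ∑ Z ∈ (X.powerset.filter (fun Z => M.IsFlat Z ∧ A ⊆ Z)).erase X,
        (∑ Y ∈ Z.powerset.filter (fun Y => M.IsFlat Y ∧ M.closure (Y ∪ A) = Z), M.mu Y)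
        = 0 := by
      apply Finset.sum_eq_zero
      intro Z hZ
      have hZne := Finset.ne_of_mem_erase hZ
      have hZ' := Finset.mem_of_mem_erase hZ
      simp only [Finset.mem_filter, Finset.mem_powerset] at hZ'
      exact ih Z (hZ'.1.ssubset_of_ne hZne) hZ'.2.1 hZ'.2.2
    rw [herase, zero_add] at grouped2
    exact grouped2

lemma mu_sign : ∀ X : Finset E, M.IsFlat X → 0 ≤ (-1 : ℤ) ^ (M.rk X) * M.mu X := by
  intro X
  induction X using Finset.strongInduction with
  | _ X ih =>
    intro hX
    by_cases hX0 : X = M.closure ∅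
    · rw [hX0, mu_closure_empty, M.rk_closure, M.rk_empty]
      norm_num
    · have hsub : M.closure ∅ ⊆ X := M.closure_empty_subset_flat hX
      have hssub : M.closure ∅ ⊂ X := hsub.ssubset_of_ne (Ne.symm hX0)
      obtain ⟨e, heX, heC⟩ := Finset.exists_of_ssubset hssub
      have hA : M.IsFlat (M.closure {e}) := M.isFlat_closure _
      have hAX : M.closure {e} ⊆ X := by
        have h1 : ({e} : Finset E) ⊆ X := Finset.singleton_subset_iff.2 heX
        have h2 := M.closure_mono h1
        rwa [hX] at h2
      have hAne : M.closure {e} ≠ M.closure ∅ := by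
        intro h
        apply heC
        have he : e ∈ M.closure {e} := M.subset_closure {e} (Finset.mem_singleton_self e)
        rwa [h] at he
      have hw := M.weisner (M.closure {e}) hA hAne X hX hAX
      have hXfib : X ∈ X.powerset.filter
          (fun Y => M.IsFlat Y ∧ M.closure (Y ∪ M.closure {e}) = X) := by
        simp only [Finset.mem_filter, Finset.mem_powerset]
        refine ⟨Finset.Subset.refl _, hX, ?_⟩
        rw [Finset.union_eq_left.2 hAX, hX]
      rw [← Finset.sum_erase_add _ _ hXfib] at hw
      have hmu : M.mu X = - ∑ Y ∈ (X.powerset.filter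
          (fun Y => M.IsFlat Y ∧ M.closure (Y ∪ M.closure {e}) = X)).erase X, M.mu Y := by
        linarith
      rw [hmu]
      have htrans : (-1 : ℤ) ^ (M.rk X) * (- ∑ Y ∈ (X.powerset.filter
          (fun Y => M.IsFlat Y ∧ M.closure (Y ∪ M.closure {e}) = X)).erase X, M.mu Y)
          = ∑ Y ∈ (X.powerset.filter
          (fun Y => M.IsFlat Y ∧ M.closure (Y ∪ M.closure {e}) = X)).erase X,
            (-1 : ℤ) ^ (M.rk Y) * M.mu Y := by
        rw [← Finset.sum_neg_distrib, Finset.mul_sum]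
        apply Finset.sum_congr rfl
        intro Y hY
        have hYne := Finset.ne_of_mem_erase hY
        have hY' := Finset.mem_of_mem_erase hY
        simp only [Finset.mem_filter, Finset.mem_powerset] at hY'
        obtain ⟨hYX, hYflat, hYcl⟩ := hY'
        have hlt : M.rk Y < M.rk X := M.rk_lt_of_flat_ssubset hYflat hYX hYne
        have hrkA : M.rk (M.closure {e}) ≤ 1 := by
          rw [M.rk_closure]
          exact M.rk_le_card {e} |>.trans (by simp)
        have hsubmod := M.rk_submod Y (M.closure {e})
        have hclrk : M.rk (Y ∪ M.closure {e}) = M.rk X := by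
          rw [← hYcl, M.rk_closure]
        have heq : M.rk X = M.rk Y + 1 := by omega
        rw [heq, pow_succ]
        ring
      rw [htrans]
      apply Finset.sum_nonneg
      intro Y hY
      have hYne := Finset.ne_of_mem_erase hY
      have hY' := Finset.mem_of_mem_erase hY
      simp only [Finset.mem_filter, Finset.mem_powerset] at hY'
      exact ih Y (hY'.1.ssubset_of_ne hYne) hY'.2.1

end FinMatroid
namespace FinMatroid

variable {E : Type} [DecidableEq E] [Fintype E] (M : FinMatroid E)

section Trunc

variable (N : FinMatroid E) (k : ℕ)

lemma trunc_closure_lt (hN : ∀ X, N.rk X = min (M.rk X) k) {X : Finset E} (h : M.rk X < k) : N.closure X = M.closure X := by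
  ext e
  rw [mem_closure, mem_closure, hN, hN]
  have h1 := M.rk_insert_le e X
  have h2 := M.rk_mono (Finset.subset_insert e X)
  omega

lemma trunc_closure_ge (hN : ∀ X, N.rk X = min (M.rk X) k) {X : Finset E} (h : k ≤ M.rk X) : N.closure X = univ := by
  apply Finset.eq_univ_of_forall
  intro e
  rw [mem_closure, hN, hN]
  have h2 := M.rk_mono (Finset.subset_insert e X)
  omega

lemma trunc_isFlat (hN : ∀ X, N.rk X = min (M.rk X) k) {Y : Finset E} :
    N.IsFlat Y ↔ (Y = univ ∨ (M.IsFlat Y ∧ M.rk Y < k)) := by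
  constructor
  · intro h
    rcases lt_or_ge (M.rk Y) k with hlt | hge
    · exact Or.inr ⟨by rw [IsFlat, ← trunc_closure_lt M N k hN hlt]; exact h, hlt⟩
    · left
      rw [← h]
      exact trunc_closure_ge M N k hN hge
  · rintro (rfl | ⟨h1, h2⟩)
    · exact N.isFlat_univ
    · rw [IsFlat, trunc_closure_lt M N k hN h2]
      exact h1

lemma trunc_mu (hN : ∀ X, N.rk X = min (M.rk X) k) : ∀ X : Finset E, M.rk X < k → N.mu X = M.mu X := by
  intro X
  induction X using Finset.strongInduction with
  | _ X ih =>
    intro hrk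
    have hcl : N.closure ∅ = M.closure ∅ :=
      trunc_closure_lt M N k hN (by rw [M.rk_empty]; omega)
    rw [mu_eq, mu_eq, hcl]
    by_cases h0 : X = M.closure ∅
    · rw [if_pos h0, if_pos h0]
    · rw [if_neg h0, if_neg h0]
      congr 1
      have hset : X.powerset.filter (fun Y => N.IsFlat Y ∧ Y ≠ X) =
          X.powerset.filter (fun Y => M.IsFlat Y ∧ Y ≠ X) := by
        ext Y
        simp only [Finset.mem_filter, Finset.mem_powerset]
        constructor
        · rintro ⟨h1, h2, h3⟩
          refine ⟨h1, ?_, h3⟩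
          rcases (trunc_isFlat M N k hN).1 h2 with rfl | ⟨h4, _⟩
          · exact M.isFlat_univ
          · exact h4
        · rintro ⟨h1, h2, h3⟩
          refine ⟨h1, ?_, h3⟩
          apply (trunc_isFlat M N k hN).2
          exact Or.inr ⟨h2, lt_of_le_of_lt (M.rk_mono h1) hrk⟩
      rw [hset]
      apply Finset.sum_congr rfl
      intro Y hY
      simp only [Finset.mem_filter, Finset.mem_powerset] at hY
      exact ih Y (hY.1.ssubset_of_ne hY.2.2) (lt_of_le_of_lt (M.rk_mono hY.1) hrk)

lemma trunc_mu_univ (hN : ∀ X, N.rk X = min (M.rk X) k) (hk : 1 ≤ k) (hr1 : 1 ≤ M.rank) (hkr : k ≤ M.rank) :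
    N.mu univ = - ∑ Y ∈ (univ : Finset E).powerset.filter
      (fun Y => M.IsFlat Y ∧ M.rk Y < k), M.mu Y := by
  have hcl : N.closure ∅ = M.closure ∅ :=
    trunc_closure_lt M N k hN (by rw [M.rk_empty]; omega)
  have hne : (univ : Finset E) ≠ M.closure ∅ := by
    intro h
    have : M.rk (M.closure ∅) = 0 := by rw [M.rk_closure, M.rk_empty]
    rw [← h] at this
    unfold rank at hr1
    omega
  rw [mu_eq, hcl, if_neg hne]
  congr 1
  have hset : (univ : Finset E).powerset.filter (fun Y => N.IsFlat Y ∧ Y ≠ univ) =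
      (univ : Finset E).powerset.filter (fun Y => M.IsFlat Y ∧ M.rk Y < k) := by
    ext Y
    simp only [Finset.mem_filter, Finset.mem_powerset]
    constructor
    · rintro ⟨h1, h2, h3⟩
      rcases (trunc_isFlat M N k hN).1 h2 with rfl | ⟨h4, h5⟩
      · exact absurd rfl h3
      · exact ⟨h1, h4, h5⟩
    · rintro ⟨h1, h2, h3⟩
      refine ⟨h1, (trunc_isFlat M N k hN).2 (Or.inr ⟨h2, h3⟩), ?_⟩
      intro h
      rw [h] at h3
      unfold rank at hkr
      omega
  rw [hset]
  apply Finset.sum_congr rfl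
  intro Y hY
  simp only [Finset.mem_filter, Finset.mem_powerset] at hY
  exact trunc_mu M N k hN Y hY.2.2

end Trunc

lemma whitney_zero : M.whitney 0 = 1 := by
  have hset : (univ : Finset E).powerset.filter (fun X => M.IsFlat X ∧ M.rk X = 0) =
      {M.closure ∅} := by
    ext X
    simp only [Finset.mem_filter, Finset.mem_powerset, Finset.mem_singleton]
    constructor
    · rintro ⟨_, h2, h3⟩
      have hs : M.closure ∅ ⊆ X := M.closure_empty_subset_flat h2
      have hr : M.rk X ≤ M.rk (M.closure ∅) := by
        rw [M.rk_closure, M.rk_empty]; omega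
      exact Finset.Subset.antisymm (M.flat_subset_of_rk_le (M.isFlat_closure ∅) hs hr) hs
    · rintro rfl
      exact ⟨Finset.subset_univ _, M.isFlat_closure ∅, by rw [M.rk_closure, M.rk_empty]⟩
  rw [whitney, hset, Finset.sum_singleton, M.mu_closure_empty]
  rfl

/-- The truncation of `M` to rank `k`. -/
def truncation (k : ℕ) : FinMatroid E where
  rk X := min (M.rk X) k
  rk_le_card X := le_trans (min_le_left _ _) (M.rk_le_card X)
  rk_mono X Y h := le_min (le_trans (min_le_left _ _) (M.rk_mono h)) (min_le_right _ _)
  rk_submod X Y := by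
    have h1 := M.rk_submod X Y
    have h2 : M.rk X ≤ M.rk (X ∪ Y) := M.rk_mono Finset.subset_union_left
    have h3 : M.rk Y ≤ M.rk (X ∪ Y) := M.rk_mono Finset.subset_union_right
    have h4 : M.rk (X ∩ Y) ≤ M.rk X := M.rk_mono Finset.inter_subset_left
    have h5 : M.rk (X ∩ Y) ≤ M.rk Y := M.rk_mono Finset.inter_subset_right
    omega

lemma truncation_rk (k : ℕ) (X : Finset E) : (M.truncation k).rk X = min (M.rk X) k := rfl

end FinMatroid
lemma FinMatroid.natAbs_key (a : ℤ) (m : ℕ) (h : 0 ≤ (-1 : ℤ) ^ m * a) :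
    ((a.natAbs : ℤ)) = (-1 : ℤ) ^ m * a := by
  have h1 : (((-1 : ℤ) ^ m * a).natAbs) = a.natAbs := by
    rw [Int.natAbs_mul, Int.natAbs_pow]
    simp
  rw [← h1]
  exact Int.natAbs_of_nonneg h

/-- for a rank `r` matroid `M` and `n < r`, the truncation `T^{r-n}(M)` of
`M` to rank `n` satisfies `w_n(M) ≥ w_n(T^{r-n}(M))`. -/
theorem stmt_9 {E : Type} [DecidableEq E] [Fintype E]
    (M : FinMatroid E) (r n : ℕ) (hr : M.rank = r) (hn : n < r)
    (T : FinMatroid E) (hT : ∀ X : Finset E, T.rk X = min (M.rk X) n) :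
    T.whitney n ≤ M.whitney n := by
  rcases Nat.eq_zero_or_pos n with rfl | hn1
  · rw [M.whitney_zero, T.whitney_zero]
  have hnr : n < M.rank := by omega
  set T' := M.truncation (n + 1) with hT'def
  have hT' : ∀ X, T'.rk X = min (M.rk X) (n + 1) := fun X => rfl
  set S := ∑ Y ∈ (univ : Finset E).powerset.filter
    (fun Y => M.IsFlat Y ∧ M.rk Y < n), M.mu Y with hSdef
  set Sn := ∑ Y ∈ (univ : Finset E).powerset.filter
    (fun Y => M.IsFlat Y ∧ M.rk Y < n + 1), M.mu Y with hSndef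
  have hr1 : 1 ≤ M.rank := by omega
  have hmuT : T.mu univ = -S := FinMatroid.trunc_mu_univ M T n hT hn1 hr1 (le_of_lt hnr)
  have hmuT' : T'.mu univ = -Sn :=
    FinMatroid.trunc_mu_univ M T' (n + 1) hT' (by omega) hr1 (by omega)
  have hwT : T.whitney n = (T.mu univ).natAbs := by
    rw [FinMatroid.whitney]
    have hset : (univ : Finset E).powerset.filter (fun X => T.IsFlat X ∧ T.rk X = n)
        = {univ} := by
      ext X
      simp only [Finset.mem_filter, Finset.mem_powerset, Finset.mem_singleton]
      constructor
      · rintro ⟨h1, h2, h3⟩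
        rcases (FinMatroid.trunc_isFlat M T n hT).1 h2 with rfl | ⟨h4, h5⟩
        · rfl
        · rw [hT] at h3
          omega
      · rintro rfl
        refine ⟨Finset.Subset.refl _, T.isFlat_univ, ?_⟩
        rw [hT]
        unfold FinMatroid.rank at hnr
        omega
    rw [hset, Finset.sum_singleton]
  have hsT : 0 ≤ (-1 : ℤ) ^ n * T.mu univ := by
    have h := T.mu_sign univ T.isFlat_univ
    have hrk : T.rk univ = n := by
      rw [hT]
      unfold FinMatroid.rank at hnr
      omega
    rwa [hrk] at h
  have hsT' : 0 ≤ (-1 : ℤ) ^ (n + 1) * T'.mu univ := by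
    have h := T'.mu_sign univ T'.isFlat_univ
    have hrk : T'.rk univ = n + 1 := by
      rw [hT']
      unfold FinMatroid.rank at hnr
      omega
    rwa [hrk] at h
  -- w_n(T) as integer
  have hwTZ : (T.whitney n : ℤ) = (-1 : ℤ) ^ n * (-S) := by
    rw [hwT, FinMatroid.natAbs_key _ n hsT, hmuT]
  -- Sn = S + sum over rank-n flats
  have hsplit : Sn = S + ∑ X ∈ (univ : Finset E).powerset.filter
      (fun X => M.IsFlat X ∧ M.rk X = n), M.mu X := by
    rw [hSndef, ← Finset.sum_filter_add_sum_filter_not ((univ : Finset E).powerset.filter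
      (fun Y => M.IsFlat Y ∧ M.rk Y < n + 1)) (fun Y => M.rk Y < n)]
    congr 1
    · rw [hSdef]
      congr 1
      rw [Finset.filter_filter]
      apply Finset.filter_congr
      intro Y _
      constructor
      · rintro ⟨⟨h1, _⟩, h3⟩; exact ⟨h1, h3⟩
      · rintro ⟨h1, h2⟩; exact ⟨⟨h1, by omega⟩, h2⟩
    · congr 1
      rw [Finset.filter_filter]
      apply Finset.filter_congr
      intro Y _
      constructor
      · rintro ⟨⟨h1, h2⟩, h3⟩
        simp only [not_lt] at h3
        exact ⟨h1, by omega⟩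
      · rintro ⟨h1, h2⟩
        exact ⟨⟨h1, by omega⟩, by omega⟩
  -- w_n(M) as integer
  have hwMZ : (M.whitney n : ℤ) = (-1 : ℤ) ^ n * (Sn - S) := by
    rw [FinMatroid.whitney, Nat.cast_sum]
    have : ∀ X ∈ (univ : Finset E).powerset.filter (fun X => M.IsFlat X ∧ M.rk X = n),
        (((M.mu X).natAbs : ℤ)) = (-1 : ℤ) ^ n * M.mu X := by
      intro X hX
      simp only [Finset.mem_filter, Finset.mem_powerset] at hX
      apply FinMatroid.natAbs_key _ n
      have h := M.mu_sign X hX.2.1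
      rwa [hX.2.2] at h
    rw [Finset.sum_congr rfl this, ← Finset.mul_sum]
    congr 1
    omega
  -- sign facts
  have h1 : 0 ≤ (-1 : ℤ) ^ n * Sn := by
    rw [hmuT', pow_succ] at hsT'
    nlinarith [hsT']
  have hle : (T.whitney n : ℤ) ≤ (M.whitney n : ℤ) := by
    rw [hwTZ, hwMZ]
    nlinarith [h1]
  exact_mod_cast hle
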